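/- Let π : 𝒞 ⥤ I be a functor. (a) If π is a prefibration and i is an initial object of I, then the inclusion 𝒞_i ⥤ 𝒞 of the fiber over i admits a right adjoint. (b) Dually, if π is an opfibration (i.e. πᵒᵖ is a fibration) and i is a terminal object of I, then the inclusion 𝒞_i ⥤ 𝒞 admits a left adjoint. -/

import Mathlib

open CategoryTheory

namespace Paper

universe w v u v₁ u₁ v₂ u₂ v₃ u₃

variable {C : Type u₁} [Category.{v₁} C] {D : Type u₂} [Category.{v₂} D]
  {I : Type u₃} [Category.{v₃} I]

/-- A morphism `φ : a ⟶ b` is cartesian with respect to `π : C ⥤ I`. -/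
def IsCartesian (π : C ⥤ I) {a b : C} (φ : a ⟶ b) : Prop :=
  ∀ (a' : C) (φ' : a' ⟶ b) (h : π.obj a' = π.obj a),
    π.map φ' = eqToHom h ≫ π.map φ →
      ∃! ψ : a' ⟶ a, π.map ψ = eqToHom h ∧ ψ ≫ φ = φ'

/-- `π : C ⥤ I` is a prefibration: every morphism of `I` with prescribed target
admits a cartesian lift. -/
def IsPrefibration (π : C ⥤ I) : Prop :=
  ∀ (b : C) (i : I) (f : i ⟶ π.obj b),
    ∃ (a : C) (φ : a ⟶ b) (h : π.obj a = i),
      IsCartesian π φ ∧ π.map φ = eqToHom h ≫ f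

/-- `π : C ⥤ I` is a (Grothendieck) fibration: a prefibration such that the
composite of two cartesian morphisms is cartesian. -/
def IsFibration (π : C ⥤ I) : Prop :=
  IsPrefibration π ∧
    ∀ ⦃a b c : C⦄ (φ : a ⟶ b) (ψ : b ⟶ c),
      IsCartesian π φ → IsCartesian π ψ → IsCartesian π (φ ≫ ψ)

/-- The fiber of `π : C ⥤ I` over `i : I`. -/
def Fiber (π : C ⥤ I) (i : I) : Type u₁ := {c : C // π.obj c = i}

instance fiberCategory (π : C ⥤ I) (i : I) : Category.{v₁} (Fiber π i) where
  Hom a b := {φ : a.1 ⟶ b.1 // π.map φ = eqToHom (a.2.trans b.2.symm)}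
  id a := ⟨𝟙 a.1, by simp⟩
  comp f g := ⟨f.1 ≫ g.1, by rw [Functor.map_comp, f.2, g.2, eqToHom_trans]⟩
  id_comp f := Subtype.ext (Category.id_comp f.1)
  comp_id f := Subtype.ext (Category.comp_id f.1)
  assoc f g h := Subtype.ext (Category.assoc f.1 g.1 h.1)

/-- The inclusion of a fiber into the total category. -/
def fiberInclusion (π : C ⥤ I) (i : I) : Fiber π i ⥤ C where
  obj a := a.1
  map f := f.1

/-- Transition-functor data for a fibration: a functor between fibers together
with the cartesian lifts exhibiting it as a transition functor along `f`. -/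
structure TransitionData (π : C ⥤ I) {i i' : I} (f : i ⟶ i')
    (F : Fiber π i' ⥤ Fiber π i) where
  lift : ∀ c : Fiber π i', (F.obj c).1 ⟶ c.1
  cart : ∀ c, IsCartesian π (lift c)
  isOver : ∀ c, π.map (lift c) = eqToHom (F.obj c).2 ≫ f ≫ eqToHom c.2.symm
  nat : ∀ {c d : Fiber π i'} (u : c ⟶ d), (F.map u).1 ≫ lift d = lift c ≫ u.1

end Paper

/-! Over an initial object `i`, every morphism from the fiber `𝒞_i` to `c` lies over the unique
map `i ⟶ π c`, so a cartesian lift `a ⟶ c` of that map is terminal among such morphisms: it is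
the counit at `c` of a right adjoint to the inclusion. Part (b) is part (a) for `πᵒᵖ`, because the
fiber of `πᵒᵖ` over `i` is the opposite of the fiber of `π` over `i`. -/

namespace Paper

open Limits Opposite

variable {C : Type u₁} [Category.{v₁} C] {I : Type u₃} [Category.{v₃} I]

def Fiber.homMk {π : C ⥤ I} {i : I} {a b : Fiber π i} (f : a.1 ⟶ b.1)
    (hf : π.map f = eqToHom (a.2.trans b.2.symm)) : a ⟶ b :=
  ⟨f, hf⟩

section Prefibration

variable {π : C ⥤ I} {i : I}

lemma map_eq_eqToHom_comp_of_isInitial (hi : IsInitial i) {x a c : C} (hx : π.obj x = i)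
    (ha : π.obj a = i) (g : x ⟶ c) (φ : a ⟶ c) :
    π.map g = eqToHom (hx.trans ha.symm) ≫ π.map φ :=
  (cancel_epi (eqToHom hx.symm)).mp (by simpa using hi.hom_ext _ _)

noncomputable def IsCartesian.isTerminalCostructuredArrow (hi : IsInitial i) {a c : C} {φ : a ⟶ c}
    (hφ : IsCartesian π φ) (ha : π.obj a = i) :
    IsTerminal
      (CostructuredArrow.mk (C := Fiber π i) (Y := ⟨a, ha⟩) (S := fiberInclusion π i) φ) := by
  have lift (Y : CostructuredArrow (fiberInclusion π i) c) :
      ∃! ψ : Y.left.1 ⟶ a, π.map ψ = eqToHom (Y.left.2.trans ha.symm) ∧ ψ ≫ φ = Y.hom :=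
    hφ _ _ _ (map_eq_eqToHom_comp_of_isInitial hi Y.left.2 ha _ _)
  choose ψ hψ huniq using lift
  exact IsTerminal.ofUniqueHom
    (fun Y => CostructuredArrow.homMk (Fiber.homMk (ψ Y) (hψ Y).1) (hψ Y).2)
    fun Y m => CostructuredArrow.hom_ext _ _
      (Subtype.ext (huniq Y m.left.1 ⟨m.left.2, CostructuredArrow.w m⟩))

theorem isLeftAdjoint_fiberInclusion (hπ : IsPrefibration π) (hi : IsInitial i) :
    (fiberInclusion π i).IsLeftAdjoint := by
  refine isLeftAdjoint_iff_hasTerminal_costructuredArrow.mpr fun c => ?_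
  obtain ⟨a, φ, ha, hφ, -⟩ := hπ c i (hi.to (π.obj c))
  exact (IsCartesian.isTerminalCostructuredArrow hi hφ ha).hasTerminal

end Prefibration

section Opposite

variable (π : C ⥤ I) (i : I)

def fiberOpFunctor : (Fiber π i)ᵒᵖ ⥤ Fiber π.op (op i) where
  obj x := ⟨op x.unop.1, congrArg op x.unop.2⟩
  map f := Fiber.homMk f.unop.1.op (by simp [f.unop.2])

def fullyFaithfulFiberOpFunctor : (fiberOpFunctor π i).FullyFaithful where
  preimage {x y} g :=
    (Fiber.homMk (a := y.unop) (b := x.unop) g.1.unop (by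
      have h := congrArg Quiver.Hom.unop g.2
      simp only [Functor.op_map, Quiver.Hom.unop_op, eqToHom_unop] at h
      exact h)).op

instance : (fiberOpFunctor π i).IsEquivalence where
  faithful := (fullyFaithfulFiberOpFunctor π i).faithful
  full := (fullyFaithfulFiberOpFunctor π i).full
  essSurj := ⟨fun y => ⟨op ⟨y.1.unop, congrArg unop y.2⟩, ⟨Iso.refl _⟩⟩⟩

lemma fiberOpFunctor_comp_fiberInclusion :
    fiberOpFunctor π i ⋙ fiberInclusion π.op (op i) = (fiberInclusion π i).op :=
  rfl

end Opposite

lemma _root_.CategoryTheory.Functor.isRightAdjoint_of_isLeftAdjoint_op {D : Type*} [Category D]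
    (F : C ⥤ D) [F.op.IsLeftAdjoint] : F.IsRightAdjoint :=
  ⟨_, ⟨(Adjunction.ofIsLeftAdjoint F.op).unop⟩⟩

theorem isRightAdjoint_fiberInclusion {π : C ⥤ I} {i : I} (hπ : IsPrefibration π.op)
    (hi : IsTerminal i) : (fiberInclusion π i).IsRightAdjoint := by
  have := isLeftAdjoint_fiberInclusion hπ hi.op
  have : (fiberInclusion π i).op.IsLeftAdjoint := by
    rw [← fiberOpFunctor_comp_fiberInclusion]
    infer_instance
  exact Functor.isRightAdjoint_of_isLeftAdjoint_op _

/-- (a) If `π` is a prefibration and `i` is an initial object of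
`I`, then the inclusion of the fiber `𝒞_i` into `𝒞` admits a right adjoint.
(b) Dually, if `π` is an opfibration (i.e. `πᵒᵖ` is a fibration) and `i` is a
terminal object of `I`, then the inclusion `𝒞_i ⥤ 𝒞` admits a left adjoint. -/
theorem stmt4 (π : C ⥤ I) (i : I) :
    (IsPrefibration π → Nonempty (Limits.IsInitial i) →
      (fiberInclusion π i).IsLeftAdjoint) ∧
    (IsFibration π.op → Nonempty (Limits.IsTerminal i) →
      (fiberInclusion π i).IsRightAdjoint) :=
  ⟨fun hπ ⟨hi⟩ => isLeftAdjoint_fiberInclusion hπ hi,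
    fun hπ ⟨hi⟩ => isRightAdjoint_fiberInclusion hπ.1 hi⟩

end Paper
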